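/- arXiv:2002.10281 — 2 statements merged into one kernel-verified Lean document; each statement's English description precedes it below -/
import Mathlib

section
/- Let T_1, ..., T_M be real-valued random variables on a probability space, α_loc ∈ (0,1), and c_1, ..., c_M real numbers with P(T_1 ≤ c_1) = 1 - α_loc. Assume P(⋂_{h=1}^{j-1} {T_h ≤ c_h}) > 0 and γ_{j,j} = P(T_j ≤ c_j | ⋂_{h=1}^{j-1} {T_h ≤ c_h}) > 0 for all 2 ≤ j ≤ M. Define M_eff^{(M)} = 1 + Σ_{j=2}^{M} log(γ_{j,j}) / log(1 - α_loc). Then 1 - (1 - α_loc)^{M_eff^{(M)}} = P(⋃_{j=1}^{M} {T_j > c_j}); i.e., the Šidák-type bound of order M is exact and equals the family-wise error rate under the global null hypothesis. -/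
open MeasureTheory ProbabilityTheory

/-- Exactness of the Šidák-type bound of full order `M`: with
`γ_{j,j} = P(T_j ≤ c_j | ⋂_{h=1}^{j-1} {T_h ≤ c_h})`, `P(T_1 ≤ c_1) = 1 - α_loc`, and
`M_eff^{(M)} = 1 + Σ_{j=2}^M log(γ_{j,j})/log(1-α_loc)`, one has
`1 - (1-α_loc)^{M_eff^{(M)}} = P(⋃_{j=1}^M {T_j > c_j})`. -/
theorem sidak_bound_order_M_exact
    {Ω : Type*} [MeasurableSpace Ω] (P : Measure Ω) [IsProbabilityMeasure P]
    (T : ℕ → Ω → ℝ) (c : ℕ → ℝ) (hT : ∀ h, Measurable (T h))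
    (M : ℕ) (hM : 1 ≤ M)
    (αloc : ℝ) (hα : αloc ∈ Set.Ioo (0 : ℝ) 1)
    (hcal : (P {ω | T 1 ω ≤ c 1}).toReal = 1 - αloc)
    (hpos : ∀ j ∈ Finset.Icc 2 M,
      P (⋂ h ∈ Finset.Icc 1 (j - 1), {ω | T h ω ≤ c h}) ≠ 0)
    (γ : ℕ → ℝ)
    (hγ : ∀ j ∈ Finset.Icc 2 M,
      γ j = (P[{ω | T j ω ≤ c j} | ⋂ h ∈ Finset.Icc 1 (j - 1), {ω | T h ω ≤ c h}]).toReal)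
    (hγpos : ∀ j ∈ Finset.Icc 2 M, 0 < γ j)
    (Meff : ℝ)
    (hMeff : Meff = 1 + ∑ j ∈ Finset.Icc 2 M, Real.log (γ j) / Real.log (1 - αloc)) :
    1 - (1 - αloc) ^ Meff
      = (P (⋃ j ∈ Finset.Icc 1 M, {ω | c j < T j ω})).toReal := by
  have h1α : (0:ℝ) < 1 - αloc := by linarith [hα.2]
  have h1α1 : (1:ℝ) - αloc ≠ 1 := by
    have := hα.1; intro h; linarith
  have hlogne : Real.log (1 - αloc) ≠ 0 :=
    Real.log_ne_zero_of_pos_of_ne_one h1α h1α1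
  set A : ℕ → Set Ω := fun j => {ω | T j ω ≤ c j} with hA
  have hAm : ∀ j, MeasurableSet (A j) := fun j => measurableSet_le (hT j) measurable_const
  -- key product identity
  have key : ∀ m, 1 ≤ m → m ≤ M →
      (P (⋂ h ∈ Finset.Icc 1 m, A h)).toReal
        = (1 - αloc) * ∏ j ∈ Finset.Icc 2 m, γ j := by
    intro m hm1 hmM
    induction m, hm1 using Nat.le_induction with
    | base => simpa using hcal
    | succ n hn ih =>
      have hnM : n ≤ M := le_of_lt (Nat.lt_of_lt_of_le (Nat.lt_succ_self n) hmM)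
      have ih' := ih hnM
      have hmem : n + 1 ∈ Finset.Icc 2 M := by
        simp [Finset.mem_Icc]; omega
      have hS : MeasurableSet (⋂ h ∈ Finset.Icc 1 n, A h) :=
        Finset.measurableSet_biInter _ (fun h _ => hAm h)
      have hSne : P (⋂ h ∈ Finset.Icc 1 n, A h) ≠ 0 := by
        have := hpos (n+1) hmem
        simpa using this
      have hSfin : P (⋂ h ∈ Finset.Icc 1 n, A h) ≠ ⊤ := measure_ne_top _ _
      have hγeq : γ (n+1)
          = ((P (⋂ h ∈ Finset.Icc 1 n, A h))⁻¹
              * P ((⋂ h ∈ Finset.Icc 1 n, A h) ∩ A (n+1))).toReal := by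
        have h := hγ (n+1) hmem
        rw [show (n+1) - 1 = n from rfl,
          ProbabilityTheory.cond_apply hS] at h
        exact h
      have hins : Finset.Icc 1 (n+1) = insert (n+1) (Finset.Icc 1 n) := by
        ext x; simp [Finset.mem_Icc]; omega
      have hsplit : (⋂ h ∈ Finset.Icc 1 (n+1), A h)
          = (⋂ h ∈ Finset.Icc 1 n, A h) ∩ A (n+1) := by
        rw [hins, Finset.set_biInter_insert, Set.inter_comm]
      have hins2 : Finset.Icc 2 (n+1) = insert (n+1) (Finset.Icc 2 n) := by
        ext x; simp [Finset.mem_Icc]; omega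
      have hSpos : 0 < (P (⋂ h ∈ Finset.Icc 1 n, A h)).toReal :=
        ENNReal.toReal_pos hSne hSfin
      have hRHS : (1 - αloc) * ∏ j ∈ Finset.Icc 2 (n+1), γ j
          = γ (n+1) * (P (⋂ h ∈ Finset.Icc 1 n, A h)).toReal := by
        rw [hins2, Finset.prod_insert (by simp), ih']; ring
      rw [hsplit, hRHS, hγeq, ENNReal.toReal_mul, ENNReal.toReal_inv,
        mul_comm ((P (⋂ h ∈ Finset.Icc 1 n, A h)).toReal⁻¹) _, mul_assoc,
        inv_mul_cancel₀ hSpos.ne', mul_one]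
  have keyM := key M hM le_rfl
  -- rpow computation
  have hrpow : (1 - αloc) ^ Meff = (1 - αloc) * ∏ j ∈ Finset.Icc 2 M, γ j := by
    rw [Real.rpow_def_of_pos h1α, hMeff, mul_add, mul_one, Finset.mul_sum]
    have : ∀ j ∈ Finset.Icc 2 M,
        Real.log (1 - αloc) * (Real.log (γ j) / Real.log (1 - αloc)) = Real.log (γ j) :=
      fun j hj => by field_simp
    rw [Finset.sum_congr rfl this, Real.exp_add, Real.exp_log h1α, Real.exp_sum]
    congr 1
    exact Finset.prod_congr rfl fun j hj => Real.exp_log (hγpos j hj)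
  -- complement
  have hcompl : (⋃ j ∈ Finset.Icc 1 M, {ω | c j < T j ω})
      = (⋂ h ∈ Finset.Icc 1 M, A h)ᶜ := by
    rw [Set.compl_iInter₂]
    refine Set.iUnion₂_congr fun j hj => ?_
    ext ω; simp [hA, not_le]
  have hS : MeasurableSet (⋂ h ∈ Finset.Icc 1 M, A h) :=
    Finset.measurableSet_biInter _ (fun h _ => hAm h)
  rw [hcompl, prob_compl_eq_one_sub hS, hrpow, ← keyM,
    ENNReal.toReal_sub_of_le prob_le_one (by simp)]
  simp
end

section
/- (Šidák-type bound via effective numbers of tests, order i.) Let T_1, ..., T_M be real-valued random variables on a probability space, α_loc ∈ (0,1), and c_1, ..., c_M real numbers with P(T_j ≤ c_j) = 1 - α_loc for all j, and assume all intersections ⋂_{h ≤ j} {T_h ≤ c_h} have positive probability. Fix i with 1 ≤ i ≤ M. For 1 < ℓ ≤ j define γ_{j,i} = P(T_j ≤ c_j | ⋂_{h=j-i+1}^{j-1} {T_h ≤ c_h}) and the full conditionals γ_{ℓ,ℓ} = P(T_ℓ ≤ c_ℓ | ⋂_{h=1}^{ℓ-1} {T_h ≤ c_h}). Set ξ(i)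 = 0 if i ≤ 2 and ξ(i) = Σ_{ℓ=2}^{i-1} log(γ_{ℓ,ℓ})/log(1-α_loc) otherwise, κ_j^{(i)} = log(γ_{j,i})/log(1-α_loc), and M_eff^{(i)} = 1 + ξ(i) + Σ_{j=max(i,2)}^{M} κ_j^{(i)}. Assume (as follows from the MSM_i positive dependency property) that for every max(i,2) ≤ j ≤ M one has P(T_j ≤ c_j | ⋂_{h=1}^{j-1} {T_h ≤ c_h}) ≥ γ_{j,i}, and that all γ-values are strictly positive. Then P(⋃_{j=1}^{M} {T_j > c_j}) ≤ 1 - (1 - α_loc)^{M_eff^{(i)}}. -/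
open MeasureTheory ProbabilityTheory

/-- Šidák-type bound via effective numbers of tests of order `i` (Theorem 2.2(i)):
with `γ_{j,i} = P(T_j ≤ c_j | ⋂_{h=j-i+1}^{j-1} {T_h ≤ c_h})`, full conditionals
`γ_{ℓ,ℓ} = P(T_ℓ ≤ c_ℓ | ⋂_{h=1}^{ℓ-1} {T_h ≤ c_h})`, `ξ(i)` and `κ_j^{(i)}` as in the paper,
`M_eff^{(i)} = 1 + ξ(i) + Σ_{j=max(i,2)}^M κ_j^{(i)}`, and the MSM_i-type hypothesis that the
full conditionals dominate the order-`i` conditionals, the family-wise error rate under the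
global null satisfies `P(⋃_{j=1}^M {T_j > c_j}) ≤ 1 - (1-α_loc)^{M_eff^{(i)}}`. -/
theorem sidak_type_bound_effective_number_of_tests_order_i
    {Ω : Type*} [MeasurableSpace Ω] (P : Measure Ω) [IsProbabilityMeasure P]
    (T : ℕ → Ω → ℝ) (c : ℕ → ℝ) (hT : ∀ h, Measurable (T h))
    (M : ℕ) (αloc : ℝ) (hα : αloc ∈ Set.Ioo (0 : ℝ) 1)
    (hmarg : ∀ j ∈ Finset.Icc 1 M, (P {ω | T j ω ≤ c j}).toReal = 1 - αloc)
    (hpos : ∀ j ∈ Finset.Icc 1 M,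
      P (⋂ h ∈ Finset.Icc 1 j, {ω | T h ω ≤ c h}) ≠ 0)
    (i : ℕ) (hi1 : 1 ≤ i) (hiM : i ≤ M)
    (γi : ℕ → ℝ)
    (hγi : ∀ j ∈ Finset.Icc (max i 2) M,
      γi j = (P[{ω | T j ω ≤ c j} |
        ⋂ h ∈ Finset.Icc (j - i + 1) (j - 1), {ω | T h ω ≤ c h}]).toReal)
    (γfull : ℕ → ℝ)
    (hγfull : ∀ j ∈ Finset.Icc 2 M,
      γfull j = (P[{ω | T j ω ≤ c j} |
        ⋂ h ∈ Finset.Icc 1 (j - 1), {ω | T h ω ≤ c h}]).toReal)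
    (hMSM : ∀ j ∈ Finset.Icc (max i 2) M, γi j ≤ γfull j)
    (hγipos : ∀ j ∈ Finset.Icc (max i 2) M, 0 < γi j)
    (hγfullpos : ∀ j ∈ Finset.Icc 2 M, 0 < γfull j)
    (ξ : ℝ)
    (hξ : ξ = if i ≤ 2 then 0
      else ∑ ℓ ∈ Finset.Icc 2 (i - 1), Real.log (γfull ℓ) / Real.log (1 - αloc))
    (Meff : ℝ)
    (hMeff : Meff = 1 + ξ
      + ∑ j ∈ Finset.Icc (max i 2) M, Real.log (γi j) / Real.log (1 - αloc)) :
    (P (⋃ j ∈ Finset.Icc 1 M, {ω | c j < T j ω})).toReal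
      ≤ 1 - (1 - αloc) ^ Meff := by
  obtain ⟨hα0, hα1⟩ := hα
  have hb0 : (0:ℝ) < 1 - αloc := by linarith
  have hb1 : (1:ℝ) - αloc < 1 := by linarith
  have hlogne : Real.log (1 - αloc) ≠ 0 := ne_of_lt (Real.log_neg hb0 hb1)
  set S : ℕ → Set Ω := fun h => {ω | T h ω ≤ c h} with hS
  have hSm : ∀ h, MeasurableSet (S h) := fun h =>
    measurableSet_le (hT h) measurable_const
  set B : ℕ → Set Ω := fun j => ⋂ h ∈ Finset.Icc 1 j, S h with hB
  have hBm : ∀ j, MeasurableSet (B j) := fun j =>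
    Finset.measurableSet_biInter _ (fun h _ => hSm h)
  have hBstep : ∀ j, 1 ≤ j → B (j+1) = B j ∩ S (j+1) := by
    intro j hj
    rw [hB]
    simp only [← Finset.insert_Icc_right_eq_Icc_add_one (by omega : 1 ≤ j + 1),
      Finset.set_biInter_insert, Set.inter_comm]
  -- chain rule
  have key : ∀ j, 1 ≤ j → j ≤ M →
      (P (B j)).toReal = (1 - αloc) * ∏ ℓ ∈ Finset.Icc 2 j, γfull ℓ := by
    intro j hj
    induction j, hj using Nat.le_induction with
    | base =>
      intro _
      have h1M : (1:ℕ) ∈ Finset.Icc 1 M := by simp; omega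
      have hB1 : B 1 = S 1 := by rw [hB]; simp
      rw [hB1, Finset.Icc_eq_empty (by omega : ¬ (2:ℕ) ≤ 1)]
      simpa using hmarg 1 h1M
    | succ j hj ih =>
      intro hjM
      have ihv := ih (by omega)
      have hjmem : j ∈ Finset.Icc 1 M := by simp; omega
      have hBj0 : P (B j) ≠ 0 := hpos j hjmem
      have hBjt : P (B j) ≠ ⊤ := measure_ne_top P _
      have hBjr0 : (P (B j)).toReal ≠ 0 := by
        simp [ENNReal.toReal_ne_zero, hBj0, hBjt]
      have hγ : γfull (j+1) = (P (B j)).toReal⁻¹ * (P (B (j+1))).toReal := by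
        have hmem : j + 1 ∈ Finset.Icc 2 M := by simp; omega
        rw [hγfull (j+1) hmem, (by omega : j + 1 - 1 = j), cond_apply (hBm j),
          ENNReal.toReal_mul, ENNReal.toReal_inv]
        congr 2
        rw [← hBstep j hj]
      rw [← Finset.insert_Icc_right_eq_Icc_add_one (by omega : 2 ≤ j + 1),
        Finset.prod_insert (by simp), hγ]
      calc (P (B (j+1))).toReal
          = (P (B j)).toReal * ((P (B j)).toReal⁻¹ * (P (B (j+1))).toReal) := by
            field_simp
        _ = (1 - αloc) * ((P (B j)).toReal⁻¹ * (P (B (j+1))).toReal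
              * ∏ ℓ ∈ Finset.Icc 2 j, γfull ℓ) := by rw [ihv]; ring
  have keyM := key M (le_trans hi1 hiM) le_rfl
  -- rewrite union as complement
  have hUnion : (⋃ j ∈ Finset.Icc 1 M, {ω | c j < T j ω}) = (B M)ᶜ := by
    rw [hB, Set.compl_iInter₂]
    apply Set.iUnion₂_congr
    intro j hj
    ext ω
    simp [hS, not_le]
  rw [hUnion, prob_compl_eq_one_sub (hBm M),
    ENNReal.toReal_sub_of_le prob_le_one (by simp), ENNReal.toReal_one, keyM]
  have hξ' : ξ = ∑ ℓ ∈ Finset.Icc 2 (i - 1), Real.log (γfull ℓ) / Real.log (1 - αloc) := by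
    rw [hξ]
    split_ifs with h
    · rw [Finset.Icc_eq_empty (by omega), Finset.sum_empty]
    · rfl
  have hsubIcc1 : Finset.Icc 2 (i-1) ⊆ Finset.Icc 2 M :=
    Finset.Icc_subset_Icc le_rfl (by omega)
  have hsubIcc2 : Finset.Icc (max i 2) M ⊆ Finset.Icc 2 M :=
    Finset.Icc_subset_Icc (by omega) le_rfl
  -- compute the rpow
  have hrpow : (1 - αloc) ^ Meff
      = (1 - αloc) * (∏ ℓ ∈ Finset.Icc 2 (i-1), γfull ℓ)
        * ∏ j ∈ Finset.Icc (max i 2) M, γi j := by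
    rw [hMeff, hξ', Real.rpow_def_of_pos hb0, mul_add, mul_add, Real.exp_add,
      Real.exp_add, mul_one, Real.exp_log hb0]
    congr 1
    · congr 1
      rw [Finset.mul_sum, Finset.sum_congr rfl
          (fun ℓ hℓ => by
            rw [mul_div_cancel₀ _ hlogne] :
            ∀ ℓ ∈ Finset.Icc 2 (i-1),
              Real.log (1 - αloc) * (Real.log (γfull ℓ) / Real.log (1 - αloc))
                = Real.log (γfull ℓ)),
        Real.exp_sum]
      exact Finset.prod_congr rfl fun ℓ hℓ =>
        Real.exp_log (hγfullpos ℓ (hsubIcc1 hℓ))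
    · rw [Finset.mul_sum, Finset.sum_congr rfl
          (fun j hj => by
            rw [mul_div_cancel₀ _ hlogne] :
            ∀ j ∈ Finset.Icc (max i 2) M,
              Real.log (1 - αloc) * (Real.log (γi j) / Real.log (1 - αloc))
                = Real.log (γi j)),
        Real.exp_sum]
      exact Finset.prod_congr rfl fun j hj => Real.exp_log (hγipos j hj)
  rw [hrpow]
  -- split the full product
  have hdisj : Disjoint (Finset.Icc 2 (i-1)) (Finset.Icc (max i 2) M) := by
    rw [Finset.disjoint_left]
    intro a ha hb
    simp only [Finset.mem_Icc] at ha hb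
    omega
  have hunion : Finset.Icc 2 (i-1) ∪ Finset.Icc (max i 2) M = Finset.Icc 2 M := by
    ext a
    simp only [Finset.mem_union, Finset.mem_Icc]
    omega
  have hsplit : ∏ ℓ ∈ Finset.Icc 2 M, γfull ℓ
      = (∏ ℓ ∈ Finset.Icc 2 (i-1), γfull ℓ) * ∏ j ∈ Finset.Icc (max i 2) M, γfull j := by
    rw [← Finset.prod_union hdisj, hunion]
  apply sub_le_sub_left
  rw [hsplit, ← mul_assoc]
  apply mul_le_mul_of_nonneg_left
  · exact Finset.prod_le_prod (fun j hj => (hγipos j hj).le) hMSM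
  · have h1 : 0 ≤ ∏ ℓ ∈ Finset.Icc 2 (i-1), γfull ℓ :=
      Finset.prod_nonneg fun ℓ hℓ => (hγfullpos ℓ (hsubIcc1 hℓ)).le
    positivity
end
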